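/- arXiv:0811.0947 — 2 statements merged into one kernel-verified Lean document; each statement's English description precedes it below -/
import Mathlib

section
/- Let E be the 2-qubit channel with Kraus operators α[[I,I],[0,0]], α[[I,−I],[0,0]], β[[I,I],[I,I]], β[[−I,I],[I,−I]] (2×2 blocks of 2×2 matrices), with α = √(q/2), β = √(1−q)/2, q = 0. Then the multiplicative domain of E equals the algebra of matrices of the form [[A,B],[B,A]] with A,B ∈ M_2. -/
open Matrix Finset

/-- The multiplicative domain of a map `Φ`. -/
def multDomain {n : Type*} [Fintype n] [DecidableEq n]
    (Φ : Matrix n n ℂ → Matrix n n ℂ) : Set (Matrix n n ℂ) :=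
  {a | ∀ b, Φ a * Φ b = Φ (a * b) ∧ Φ b * Φ a = Φ (b * a)}

noncomputable def Phi : Matrix (Fin 2 ⊕ Fin 2) (Fin 2 ⊕ Fin 2) ℂ →
    Matrix (Fin 2 ⊕ Fin 2) (Fin 2 ⊕ Fin 2) ℂ := fun X =>
  ((2⁻¹ : ℂ) • fromBlocks 1 1 1 1) * X * ((2⁻¹ : ℂ) • fromBlocks 1 1 1 1)ᴴ +
  ((2⁻¹ : ℂ) • fromBlocks (-1) 1 1 (-1)) * X * ((2⁻¹ : ℂ) • fromBlocks (-1) 1 1 (-1))ᴴ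

theorem Phi_apply (A B C D : Matrix (Fin 2) (Fin 2) ℂ) :
    Phi (fromBlocks A B C D) =
      fromBlocks ((2⁻¹ : ℂ) • (A + D)) ((2⁻¹ : ℂ) • (B + C))
        ((2⁻¹ : ℂ) • (B + C)) ((2⁻¹ : ℂ) • (A + D)) := by
  simp only [Phi, conjTranspose_smul, fromBlocks_conjTranspose, conjTranspose_one,
    conjTranspose_neg, smul_mul_assoc, mul_smul_comm, fromBlocks_multiply, smul_smul,
    fromBlocks_add, fromBlocks_smul]
  rw [fromBlocks_inj]
  refine ⟨?_, ?_, ?_, ?_⟩ <;> simp [Matrix.mul_add, Matrix.add_mul, smul_smul] <;> module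

theorem multDomain_Phi :
    multDomain Phi =
      {a : Matrix (Fin 2 ⊕ Fin 2) (Fin 2 ⊕ Fin 2) ℂ |
        ∃ A B : Matrix (Fin 2) (Fin 2) ℂ, a = fromBlocks A B B A} := by
  ext a
  constructor
  · intro h
    obtain ⟨h1, -⟩ := h (fromBlocks 1 0 0 0)
    rw [← fromBlocks_toBlocks a] at h1 ⊢
    rw [Phi_apply, Phi_apply, fromBlocks_multiply, fromBlocks_multiply, Phi_apply] at h1
    simp only [Matrix.mul_zero, Matrix.mul_one, Matrix.zero_mul, add_zero, zero_add,
      Matrix.smul_mul, Matrix.mul_smul] at h1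
    rw [fromBlocks_inj] at h1
    obtain ⟨e1, e2, -, -⟩ := h1
    have hP : a.toBlocks₁₁ + a.toBlocks₂₂ = a.toBlocks₁₁ + a.toBlocks₁₁ := by
      have := congrArg (fun X => (4 : ℂ) • X) e1
      simpa [smul_smul, show (4:ℂ)*(2⁻¹*2⁻¹)=1 by norm_num,
        show (4:ℂ)*2⁻¹=2 by norm_num, two_smul] using this
    have hQ : a.toBlocks₁₂ + a.toBlocks₂₁ = a.toBlocks₂₁ + a.toBlocks₂₁ := by
      have := congrArg (fun X => (4 : ℂ) • X) e2
      simpa [smul_smul, show (4:ℂ)*(2⁻¹*2⁻¹)=1 by norm_num,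
        show (4:ℂ)*2⁻¹=2 by norm_num, two_smul] using this
    have h22 : a.toBlocks₂₂ = a.toBlocks₁₁ := by
      exact add_left_cancel hP
    have h12 : a.toBlocks₁₂ = a.toBlocks₂₁ := by
      have := add_right_cancel hQ
      exact this
    exact ⟨a.toBlocks₁₁, a.toBlocks₂₁, by rw [h22, h12]⟩
  · rintro ⟨A, B, rfl⟩ b
    rw [← fromBlocks_toBlocks b]
    simp only [fromBlocks_multiply, Phi_apply]
    constructor <;> rw [fromBlocks_inj] <;>
      refine ⟨?_, ?_, ?_, ?_⟩ <;>
      simp only [Matrix.mul_add, Matrix.add_mul, smul_smul, Matrix.smul_mul,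
        Matrix.mul_smul, smul_add] <;> module

/-- Example (Case 1, `q = 0`): for the 2-qubit channel with Kraus operators
`α[[I,I],[0,0]], α[[I,−I],[0,0]], β[[I,I],[I,I]], β[[−I,I],[I,−I]]` with
`α = √(q/2) = 0` and `β = √(1−q)/2 = 1/2`, the multiplicative domain is exactly the
algebra of block matrices of the form `[[A,B],[B,A]]`. -/
theorem multDomain_two_qubit_example :
    let q : ℝ := 0
    let α : ℂ := (Real.sqrt (q / 2) : ℝ)
    let β : ℂ := ((Real.sqrt (1 - q) / 2 : ℝ) : ℂ)
    let I2 : Matrix (Fin 2) (Fin 2) ℂ := 1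
    let K₁ := α • fromBlocks I2 I2 0 0
    let K₂ := α • fromBlocks I2 (-I2) 0 0
    let K₃ := β • fromBlocks I2 I2 I2 I2
    let K₄ := β • fromBlocks (-I2) I2 I2 (-I2)
    multDomain (fun X => K₁ * X * K₁ᴴ + K₂ * X * K₂ᴴ + K₃ * X * K₃ᴴ + K₄ * X * K₄ᴴ) =
      {a | ∃ A B : Matrix (Fin 2) (Fin 2) ℂ, a = fromBlocks A B B A} := by
  intro q α β I2 K₁ K₂ K₃ K₄
  have hα : α = 0 := by simp [α, q]
  have hβ : β = (2⁻¹ : ℂ) := by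
    simp [β, q, Real.sqrt_one]
  have hfun : (fun X => K₁ * X * K₁ᴴ + K₂ * X * K₂ᴴ + K₃ * X * K₃ᴴ + K₄ * X * K₄ᴴ) = Phi := by
    funext X
    simp [K₁, K₂, K₃, K₄, I2, hα, hβ, Phi]
  rw [hfun]
  exact multDomain_Phi
end

section
/- Let E be the channel on M_6(ℂ), viewed as 3×3 block matrices with 2×2 blocks A_{ij}, defined by E((A_{ij})) = diag(0, A_{11}+A_{22}, A_{33}). Then E is a quantum channel (completely positive and trace-preserving), and its multiplicative domain is exactly the set of matrices supported on the (3,3) block, i.e., {diag(0,0,A) : A ∈ M_2}. -/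
open Matrix Finset

/-- The channel `E` as a top-level auxiliary definition. -/
noncomputable def EEaux :
    Matrix (Fin 3 × Fin 2) (Fin 3 × Fin 2) ℂ → Matrix (Fin 3 × Fin 2) (Fin 3 × Fin 2) ℂ :=
  fun X => Matrix.of fun p q =>
    if p.1 = 1 ∧ q.1 = 1 then X (0, p.2) (0, q.2) + X (1, p.2) (1, q.2)
    else if p.1 = 2 ∧ q.1 = 2 then X (2, p.2) (2, q.2)
    else 0

/-- Kraus operators for `E`. -/
def myKaux : Fin 3 → Matrix (Fin 3 × Fin 2) (Fin 3 × Fin 2) ℂ :=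
  ![Matrix.of fun p q => if p.1 = 1 ∧ q.1 = 0 ∧ p.2 = q.2 then 1 else 0,
    Matrix.of fun p q => if p.1 = 1 ∧ q.1 = 1 ∧ p.2 = q.2 then 1 else 0,
    Matrix.of fun p q => if p.1 = 2 ∧ q.1 = 2 ∧ p.2 = q.2 then 1 else 0]

/-- Matrix units. -/
def eeaux (p0 q0 : Fin 3 × Fin 2) : Matrix (Fin 3 × Fin 2) (Fin 3 × Fin 2) ℂ :=
  Matrix.of fun p q => if p = p0 ∧ q = q0 then 1 else 0

lemma myKaux_sum : ∑ i, (myKaux i)ᴴ * myKaux i = 1 := by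
  ext ⟨i, s⟩ ⟨j, t⟩
  simp only [Fin.sum_univ_three, myKaux, Matrix.add_apply, Matrix.mul_apply,
    Matrix.conjTranspose_apply, Matrix.one_apply, Matrix.of_apply, Fintype.sum_prod_type,
    Fin.sum_univ_three, Fin.sum_univ_two, Matrix.cons_val_zero, Matrix.cons_val_one,
    Matrix.head_cons, Matrix.cons_val_two, Matrix.tail_cons]
  fin_cases i <;> fin_cases j <;> fin_cases s <;> fin_cases t <;>
    norm_num [Prod.ext_iff, Fin.ext_iff]

set_option maxHeartbeats 1000000 in
lemma myKaux_kraus (X : Matrix (Fin 3 × Fin 2) (Fin 3 × Fin 2) ℂ) :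
    EEaux X = ∑ i, myKaux i * X * (myKaux i)ᴴ := by
  ext ⟨i, s⟩ ⟨j, t⟩
  simp only [EEaux, Fin.sum_univ_three, myKaux, Matrix.add_apply, Matrix.mul_apply,
    Matrix.conjTranspose_apply, Matrix.of_apply, Fintype.sum_prod_type,
    Fin.sum_univ_three, Fin.sum_univ_two, Matrix.cons_val_zero, Matrix.cons_val_one,
    Matrix.head_cons, Matrix.cons_val_two, Matrix.tail_cons, Finset.sum_mul]
  fin_cases i <;> fin_cases j <;> fin_cases s <;> fin_cases t <;>
    norm_num [Prod.ext_iff, Fin.ext_iff]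

lemma EEaux_trace (X : Matrix (Fin 3 × Fin 2) (Fin 3 × Fin 2) ℂ) :
    (EEaux X).trace = X.trace := by
  simp [EEaux, Matrix.trace, Matrix.diag, Fintype.sum_prod_type, Fin.sum_univ_three,
    Fin.sum_univ_two]
  ring

set_option maxHeartbeats 1000000 in
lemma EEaux_multDomain : multDomain EEaux =
    {a | ∃ A : Matrix (Fin 2) (Fin 2) ℂ,
      a = Matrix.of fun p q => if p.1 = 2 ∧ q.1 = 2 then A p.2 q.2 else 0} := by
  ext a
  constructor
  · intro h
    refine ⟨fun s t => a (2, s) (2, t), ?_⟩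
    have h11 : ∀ s t : Fin 2, a (1, s) (1, t) = 0 := by
      intro s t
      have := congrFun (congrFun (h (eeaux (0, t) (0, 0))).1 (1, s)) (1, 0)
      fin_cases s <;> fin_cases t <;>
        simpa [EEaux, eeaux, Matrix.mul_apply, Fintype.sum_prod_type, Fin.sum_univ_three,
          Fin.sum_univ_two, Prod.ext_iff, -Prod.mk_zero_zero, -Prod.mk_one_one] using this
    have h00 : ∀ s t : Fin 2, a (0, s) (0, t) = 0 := by
      intro s t
      have := congrFun (congrFun (h (eeaux (1, t) (1, 0))).1 (1, s)) (1, 0)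
      fin_cases s <;> fin_cases t <;>
        simpa [EEaux, eeaux, Matrix.mul_apply, Fintype.sum_prod_type, Fin.sum_univ_three,
          Fin.sum_univ_two, Prod.ext_iff, h11, -Prod.mk_zero_zero, -Prod.mk_one_one] using this
    have h01 : ∀ s t : Fin 2, a (0, s) (1, t) = 0 := by
      intro s t
      have := congrFun (congrFun (h (eeaux (1, t) (0, 0))).1 (1, s)) (1, 0)
      fin_cases s <;> fin_cases t <;>
        simpa [EEaux, eeaux, Matrix.mul_apply, Fintype.sum_prod_type, Fin.sum_univ_three,
          Fin.sum_univ_two, Prod.ext_iff, -Prod.mk_zero_zero, -Prod.mk_one_one] using this.symm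
    have h10 : ∀ s t : Fin 2, a (1, s) (0, t) = 0 := by
      intro s t
      have := congrFun (congrFun (h (eeaux (0, t) (1, 0))).1 (1, s)) (1, 0)
      fin_cases s <;> fin_cases t <;>
        simpa [EEaux, eeaux, Matrix.mul_apply, Fintype.sum_prod_type, Fin.sum_univ_three,
          Fin.sum_univ_two, Prod.ext_iff, -Prod.mk_zero_zero, -Prod.mk_one_one] using this.symm
    have h02 : ∀ s t : Fin 2, a (0, s) (2, t) = 0 := by
      intro s t
      have := congrFun (congrFun (h (eeaux (2, 0) (0, s))).2 (2, 0)) (2, t)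
      fin_cases s <;> fin_cases t <;>
        simpa [EEaux, eeaux, Matrix.mul_apply, Fintype.sum_prod_type, Fin.sum_univ_three,
          Fin.sum_univ_two, Prod.ext_iff, -Prod.mk_zero_zero, -Prod.mk_one_one] using this.symm
    have h12 : ∀ s t : Fin 2, a (1, s) (2, t) = 0 := by
      intro s t
      have := congrFun (congrFun (h (eeaux (2, 0) (1, s))).2 (2, 0)) (2, t)
      fin_cases s <;> fin_cases t <;>
        simpa [EEaux, eeaux, Matrix.mul_apply, Fintype.sum_prod_type, Fin.sum_univ_three,
          Fin.sum_univ_two, Prod.ext_iff, -Prod.mk_zero_zero, -Prod.mk_one_one] using this.symm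
    have h20 : ∀ s t : Fin 2, a (2, s) (0, t) = 0 := by
      intro s t
      have := congrFun (congrFun (h (eeaux (0, t) (2, 0))).1 (2, s)) (2, 0)
      fin_cases s <;> fin_cases t <;>
        simpa [EEaux, eeaux, Matrix.mul_apply, Fintype.sum_prod_type, Fin.sum_univ_three,
          Fin.sum_univ_two, Prod.ext_iff, -Prod.mk_zero_zero, -Prod.mk_one_one] using this.symm
    have h21 : ∀ s t : Fin 2, a (2, s) (1, t) = 0 := by
      intro s t
      have := congrFun (congrFun (h (eeaux (1, t) (2, 0))).1 (2, s)) (2, 0)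
      fin_cases s <;> fin_cases t <;>
        simpa [EEaux, eeaux, Matrix.mul_apply, Fintype.sum_prod_type, Fin.sum_univ_three,
          Fin.sum_univ_two, Prod.ext_iff, -Prod.mk_zero_zero, -Prod.mk_one_one] using this.symm
    ext ⟨i, s⟩ ⟨j, t⟩
    fin_cases i <;> fin_cases j <;>
      simp [h00, h01, h02, h10, h11, h12, h20, h21, Fin.ext_iff]
  · rintro ⟨A, rfl⟩ b
    constructor <;>
    · ext ⟨i, s⟩ ⟨j, t⟩
      fin_cases i <;> fin_cases j <;>
        simp [EEaux, Matrix.mul_apply, Fintype.sum_prod_type, Fin.sum_univ_three,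
          Fin.sum_univ_two, Fin.ext_iff]

/-- Example: the channel on `M₆(ℂ)` (viewed as `3×3` block matrices over `M₂(ℂ)`)
`E((A_{ij})) = diag(0, A₁₁ + A₂₂, A₃₃)` is completely positive and trace-preserving, and
its multiplicative domain is exactly the set of matrices supported on the `(3,3)` block. -/
theorem multDomain_amplitude_damping_like_example :
    let E : Matrix (Fin 3 × Fin 2) (Fin 3 × Fin 2) ℂ →
        Matrix (Fin 3 × Fin 2) (Fin 3 × Fin 2) ℂ :=
      fun X => Matrix.of fun p q =>
        if p.1 = 1 ∧ q.1 = 1 then X (0, p.2) (0, q.2) + X (1, p.2) (1, q.2)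
        else if p.1 = 2 ∧ q.1 = 2 then X (2, p.2) (2, q.2)
        else 0
    (∃ (m : ℕ) (K : Fin m → Matrix (Fin 3 × Fin 2) (Fin 3 × Fin 2) ℂ),
      (∑ i, (K i)ᴴ * K i = 1) ∧ ∀ X, E X = ∑ i, K i * X * (K i)ᴴ) ∧
    (∀ X, (E X).trace = X.trace) ∧
    multDomain E =
      {a | ∃ A : Matrix (Fin 2) (Fin 2) ℂ,
        a = Matrix.of fun p q => if p.1 = 2 ∧ q.1 = 2 then A p.2 q.2 else 0} := by
  intro E
  have hE : E = EEaux := rfl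
  rw [hE]
  exact ⟨⟨3, myKaux, myKaux_sum, myKaux_kraus⟩, EEaux_trace, EEaux_multDomain⟩
end
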